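/- arXiv:1202.0670 — 2 statements merged into one kernel-verified Lean document; each statement's English description precedes it below -/
import Mathlib

section
/- Let C be an r-identifying code in a graph G and D a non-empty subset of C. Fix c ∈ D and let I_1, …, I_k be the distinct sets among {I_r(D;u) : u ∈ B_r(c)}, with i_j the number of vertices u ∈ B_r(c) satisfying I_r(D;u) = I_j. Then s_r(C;c) ≤ Σ_{j=1}^{k} ( 1/|I_j| + (i_j − 1)/(|I_j|+1) ). -/
def gball {V : Type*} (G : SimpleGraph V) (r : ℕ) (u : V) : Set V := {x | G.dist u x ≤ r}

def gIdent {V : Type*} (G : SimpleGraph V) (r : ℕ) (C : Set V) : Prop :=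
  ∀ u : V, (gball G r u ∩ C).Nonempty ∧ ∀ v : V, u ≠ v → gball G r u ∩ C ≠ gball G r v ∩ C

noncomputable def gshare {V : Type*} (G : SimpleGraph V) (r : ℕ) (D : Set V) (c : V) : ℝ :=
  ∑' u : (gball G r c), 1 / ((gball G r ↑u ∩ D).ncard : ℝ)

/-!
Split `B_r(c)` into the classes of equal `I_r(D; u)`. In the class of a set `I`, every `I_r(C; u)`
contains `I`, so `u` contributes at most `1/|I|`; and a contribution above `1/(|I|+1)` forces
`I_r(C; u) = I`, which, `C` being identifying, happens for at most one `u`.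
-/

open Finset

lemma Finset.sum_le_add_card_sub_one_mul {ι R : Type*} [DecidableEq ι]
    [Ring R] [LinearOrder R] [IsOrderedRing R]
    {T : Finset ι} (hT : T.Nonempty) {f : ι → R} {a b : R} (ha : ∀ u ∈ T, f u ≤ a)
    (hb : ∀ u ∈ T, ∀ v ∈ T, b < f u → b < f v → u = v) :
    ∑ u ∈ T, f u ≤ a + (#T - 1) * b := by
  obtain ⟨u₀, hu₀, hrest⟩ : ∃ u₀ ∈ T, ∀ v ∈ T.erase u₀, f v ≤ b := by
    by_cases h : ∃ u ∈ T, b < f u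
    · obtain ⟨u₀, hu₀, hbu₀⟩ := h
      refine ⟨u₀, hu₀, fun v hv => not_lt.1 fun hbv => ?_⟩
      exact ne_of_mem_erase hv (hb v (mem_of_mem_erase hv) u₀ hu₀ hbv hbu₀)
    · push Not at h
      obtain ⟨u₀, hu₀⟩ := hT
      exact ⟨u₀, hu₀, fun v hv => h v (mem_of_mem_erase hv)⟩
  calc ∑ u ∈ T, f u = f u₀ + ∑ u ∈ T.erase u₀, f u := (add_sum_erase T f hu₀).symm
    _ ≤ a + #(T.erase u₀) • b := add_le_add (ha u₀ hu₀) (sum_le_card_nsmul _ _ _ hrest)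
    _ = a + (#T - 1) * b := by
      rw [nsmul_eq_mul, card_erase_of_mem hu₀, Nat.cast_sub hT.card_pos, Nat.cast_one]

lemma sum_one_div_ncard_le {α β : Type*} {T : Finset α} (hT : T.Nonempty) {N : α → Set β}
    (hN : Set.InjOn N T) (hfin : ∀ u ∈ T, (N u).Finite) {I : Set β} (hI : I.Nonempty)
    (hsub : ∀ u ∈ T, I ⊆ N u) :
    ∑ u ∈ T, 1 / ((N u).ncard : ℝ) ≤ 1 / I.ncard + (#T - 1) / (I.ncard + 1) := by
  classical
  obtain ⟨u₀, hu₀⟩ := hT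
  have hIpos : 0 < I.ncard := (Set.ncard_pos ((hfin u₀ hu₀).subset (hsub u₀ hu₀))).2 hI
  have hle : ∀ u ∈ T, I.ncard ≤ (N u).ncard := fun u hu =>
    Set.ncard_le_ncard (hsub u hu) (hfin u hu)
  have heq : ∀ u ∈ T, 1 / ((I.ncard : ℝ) + 1) < 1 / (N u).ncard → N u = I := by
    intro u hu hlt
    have hNpos : (0 : ℝ) < (N u).ncard := by exact_mod_cast hIpos.trans_le (hle u hu)
    have hsmall : (N u).ncard < I.ncard + 1 := by
      exact_mod_cast (one_div_lt_one_div (by positivity) hNpos).1 hlt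
    exact (Set.eq_of_subset_of_ncard_le (hsub u hu) (by omega) (hfin u hu)).symm
  rw [div_eq_mul_one_div _ ((I.ncard : ℝ) + 1)]
  refine sum_le_add_card_sub_one_mul ⟨u₀, hu₀⟩ (fun u hu => ?_) fun u hu v hv hbu hbv => ?_
  · exact one_div_le_one_div_of_le (by exact_mod_cast hIpos) (by exact_mod_cast hle u hu)
  · exact hN hu hv ((heq u hu hbu).trans (heq v hv hbv).symm)

lemma Finset.sum_eq_sum_fiberwise_of_injective {α β ι M : Type*} [Fintype ι] [DecidableEq β]
    [AddCommMonoid M] {s : Finset α} {g : α → β} {I : ι → β} (hI : Function.Injective I)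
    (hcover : ∀ u ∈ s, ∃ j, g u = I j) (f : α → M) :
    ∑ u ∈ s, f u = ∑ j, ∑ u ∈ s with g u = I j, f u := by
  classical
  rw [← sum_fiberwise_of_maps_to (t := univ.image I) (g := g) (fun u hu => ?_) f,
    sum_image fun j _ j' _ h => hI h]
  obtain ⟨j, hj⟩ := hcover u hu
  exact mem_image.2 ⟨j, mem_univ j, hj.symm⟩

lemma gIdent.injective {V : Type*} {G : SimpleGraph V} {r : ℕ} {C : Set V} (hC : gIdent G r C) :
    Function.Injective fun u => gball G r u ∩ C :=
  fun u v h => by_contra fun hne => (hC u).2 v hne h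

lemma mem_gball_comm {V : Type*} {G : SimpleGraph V} {r : ℕ} {u v : V} :
    u ∈ gball G r v ↔ v ∈ gball G r u := by
  simp only [gball, Set.mem_ofPred_eq, SimpleGraph.dist_comm]

lemma gshare_eq_sum {V : Type*} (G : SimpleGraph V) (r : ℕ) (D : Set V) {c : V}
    (hc : (gball G r c).Finite) :
    gshare G r D c = ∑ u ∈ hc.toFinset, 1 / ((gball G r u ∩ D).ncard : ℝ) := by
  rw [gshare, ← Finset.tsum_subtype', hc.coe_toFinset]

theorem stmt3_general {V : Type*} (G : SimpleGraph V) (r : ℕ)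
    (hfin : ∀ u : V, (gball G r u).Finite) (C D : Set V) (hC : gIdent G r C) (hD : D ⊆ C)
    (c : V) (hc : c ∈ D) (k : ℕ) (I : Fin k → Set V)
    (i : Fin k → ℕ) (hinj : Function.Injective I)
    (hcover : ∀ u ∈ gball G r c, ∃ j : Fin k, gball G r u ∩ D = I j)
    (harise : ∀ j : Fin k, ∃ u ∈ gball G r c, gball G r u ∩ D = I j)
    (hcount : ∀ j : Fin k, i j = {u ∈ gball G r c | gball G r u ∩ D = I j}.ncard) :
    gshare G r C c ≤
      ∑ j : Fin k, (1 / ((I j).ncard : ℝ) + ((i j : ℝ) - 1) / (((I j).ncard : ℝ) + 1)) := by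
  classical
  set S := (hfin c).toFinset
  rw [gshare_eq_sum G r C (hfin c),
    sum_eq_sum_fiberwise_of_injective hinj fun u hu => hcover u ((hfin c).mem_toFinset.1 hu)]
  refine sum_le_sum fun j _ => ?_
  set T := S.filter (gball G r · ∩ D = I j)
  obtain ⟨u₀, hu₀, hIj⟩ := harise j
  have hclass : ∀ u ∈ T, I j ⊆ gball G r u ∩ C := fun u hu =>
    (mem_filter.1 hu).2 ▸ Set.inter_subset_inter_right _ hD
  have hcard : #T = i j := by
    rw [hcount j, ← Set.ncard_coe_finset, coe_filter]
    simp only [S, Set.Finite.mem_toFinset]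
  rw [← hcard]
  exact sum_one_div_ncard_le ⟨u₀, mem_filter.2 ⟨(hfin c).mem_toFinset.2 hu₀, hIj⟩⟩
    hC.injective.injOn (fun u _ => (hfin u).inter_of_left C)
    ⟨c, hIj ▸ ⟨mem_gball_comm.1 hu₀, hc⟩⟩ hclass

theorem stmt3 {V : Type*} (G : SimpleGraph V) (hG : G.Connected) (r : ℕ) (hr : 0 < r)
    (hfin : ∀ u : V, (gball G r u).Finite) (C D : Set V) (hC : gIdent G r C) (hD : D ⊆ C)
    (hDne : D.Nonempty) (c : V) (hc : c ∈ D) (k : ℕ) (hk : 0 < k) (I : Fin k → Set V)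
    (i : Fin k → ℕ) (hinj : Function.Injective I)
    (hcover : ∀ u ∈ gball G r c, ∃ j : Fin k, gball G r u ∩ D = I j)
    (harise : ∀ j : Fin k, ∃ u ∈ gball G r c, gball G r u ∩ D = I j)
    (hcount : ∀ j : Fin k, i j = {u ∈ gball G r c | gball G r u ∩ D = I j}.ncard) :
    gshare G r C c ≤
      ∑ j : Fin k, (1 / ((I j).ncard : ℝ) + ((i j : ℝ) - 1) / (((I j).ncard : ℝ) + 1)) :=
  stmt3_general G r hfin C D hC hD c hc k I i hinj hcover harise hcount
end

section
/- Let C be a 2-identifying code in the hexagonal grid G_H and let c ∈ C be a codeword all three of whose neighbors belong to C. Then s_2(C;c) ≤ 67/20. -/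
def hexGraph : SimpleGraph (ℤ × ℤ) where
  Adj u v := (u.2 = v.2 ∧ (u.1 = v.1 + 1 ∨ u.1 = v.1 - 1)) ∨
    (u.1 = v.1 ∧ (((u.1 + u.2) % 2 = 0 ∧ u.2 = v.2 - 1) ∨ ((u.1 + u.2) % 2 ≠ 0 ∧ u.2 = v.2 + 1)))
  symm := by constructor; rintro ⟨a, b⟩ ⟨c, d⟩ h; dsimp only at *; omega
  loopless := by constructor; rintro ⟨a, b⟩ h; dsimp only at h; omega

def hexBall (r : ℕ) (u : ℤ × ℤ) : Set (ℤ × ℤ) := {x | hexGraph.dist u x ≤ r}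

def I2 (C : Set (ℤ × ℤ)) (u : ℤ × ℤ) : Set (ℤ × ℤ) := hexBall 2 u ∩ C

def isIdentifying2 (C : Set (ℤ × ℤ)) : Prop :=
  ∀ u : ℤ × ℤ, (I2 C u).Nonempty ∧ ∀ v : ℤ × ℤ, u ≠ v → I2 C u ≠ I2 C v

noncomputable def share2 (C : Set (ℤ × ℤ)) (c : ℤ × ℤ) : ℝ :=
  ∑' u : (hexBall 2 c), 1 / ((I2 C ↑u).ncard : ℝ)

def Q (n : ℕ) : Set (ℤ × ℤ) := {p | |p.1| ≤ (n : ℤ) ∧ |p.2| ≤ (n : ℤ)}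

noncomputable def density (C : Set (ℤ × ℤ)) : ℝ :=
  Filter.limsup (fun n : ℕ => ((C ∩ Q n).ncard : ℝ) / ((Q n).ncard : ℝ)) Filter.atTop

/-!
The ball `B₂(c)` consists of `c`, its three neighbours `nᵢ`, and the two further neighbours of
each `nᵢ`. The sets `I₂(u)` for `u ∈ {c, n₁, n₂, n₃}` all contain this four-element set and are
pairwise distinct, so at most one of them has exactly four elements: together they contribute at
most `1/4 + 3/5`. For each `i`, the sets `I₂(w)` of the two further neighbours `w` of `nᵢ` contain
`{c, nᵢ}` and differ, contributing at most `1/2 + 1/3`. In total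
`s₂(c) ≤ 17/20 + 3 · 5/6 = 67/20`.
-/

open Finset

theorem one_div_ncard_le_of_ssubset {α : Type*} {s : Finset α} {t : Set α} (hst : ↑s ⊆ t)
    (hne : t ≠ ↑s) : 1 / (t.ncard : ℝ) ≤ 1 / (#s + 1) := by
  rcases t.finite_or_infinite with ht | ht
  · have hlt : #s < t.ncard := by
      simpa using Set.ncard_lt_ncard (hst.ssubset_of_ne hne.symm) ht
    gcongr
    exact_mod_cast hlt
  · rw [ht.ncard, Nat.cast_zero, div_zero]
    positivity

/-- At most one of the sets `f i` can be `s` itself; all the others are strictly larger. -/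
theorem sum_one_div_ncard_le_of_injOn {ι α : Type*} {f : ι → Set α} {T : Finset ι}
    (hf : Set.InjOn f T) {s : Finset α} (hs : s.Nonempty) (hsf : ∀ i ∈ T, ↑s ⊆ f i) :
    ∑ i ∈ T, 1 / ((f i).ncard : ℝ) ≤ #T / (#s + 1) + (1 / #s - 1 / (#s + 1)) := by
  classical
  set δ : ℝ := 1 / #s - 1 / (#s + 1)
  have hδ : 0 ≤ δ := by
    have : (0 : ℝ) < #s := by exact_mod_cast hs.card_pos
    simp only [δ, sub_nonneg]; gcongr; linarith
  have hterm : ∀ i ∈ T, 1 / ((f i).ncard : ℝ) ≤ 1 / (#s + 1) + if f i = ↑s then δ else 0 := by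
    intro i hi
    split_ifs with h
    · simp [δ, h]
    · simpa using one_div_ncard_le_of_ssubset (hsf i hi) h
  have hone : #{i ∈ T | f i = ↑s} ≤ 1 :=
    card_le_one.mpr fun i hi j hj => by
      simp only [mem_filter] at hi hj
      exact hf hi.1 hj.1 (hi.2.trans hj.2.symm)
  calc ∑ i ∈ T, 1 / ((f i).ncard : ℝ)
      ≤ ∑ i ∈ T, (1 / (#s + 1) + if f i = ↑s then δ else 0) := sum_le_sum hterm
    _ = #T / (#s + 1) + #{i ∈ T | f i = ↑s} * δ := by
      rw [sum_add_distrib, ← sum_filter]; simp only [sum_const, nsmul_eq_mul]; ring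
    _ ≤ #T / (#s + 1) + δ := by
      gcongr
      exact mul_le_of_le_one_left hδ (by exact_mod_cast hone)

theorem Finset.sum_biUnion_le_of_nonneg {ι α M : Type*} [AddCommMonoid M] [PartialOrder M]
    [IsOrderedAddMonoid M] [DecidableEq α] (s : Finset ι) (t : ι → Finset α) {f : α → M}
    (hf : ∀ x, 0 ≤ f x) :
    ∑ x ∈ s.biUnion t, f x ≤ ∑ i ∈ s, ∑ x ∈ t i, f x := by
  have : s.biUnion t = (s.sigma t).image Sigma.snd := by ext; simp
  rw [this, sum_sigma']
  exact sum_image_le_of_nonneg fun x _ => hf x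

namespace SimpleGraph

variable {V : Type*} {G : SimpleGraph V}

theorem dist_le_two_of_adj_of_adj {u v w : V} (huw : G.Adj u w) (hwv : G.Adj w v) :
    G.dist u v ≤ 2 :=
  G.dist_le (.cons huw (.cons hwv .nil))

theorem dist_le_two_of_adj {u v : V} (h : G.Adj u v) : G.dist u v ≤ 2 :=
  (dist_eq_one_iff_adj.mpr h).trans_le one_le_two

theorem Connected.eq_or_adj_or_exists_of_dist_le_two (hG : G.Connected) {u v : V}
    (h : G.dist u v ≤ 2) : u = v ∨ G.Adj u v ∨ ∃ w, G.Adj u w ∧ G.Adj w v := by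
  obtain ⟨p, hp⟩ := hG.exists_walk_length_eq_dist u v
  match p, hp ▸ h with
  | .nil, _ => exact .inl rfl
  | .cons h₁ .nil, _ => exact .inr (.inl h₁)
  | .cons h₁ (.cons h₂ .nil), _ => exact .inr (.inr ⟨_, h₁, h₂⟩)

theorem reachable_of_forall_reachable_add_one {f : ℤ → V}
    (h : ∀ n, G.Reachable (f n) (f (n + 1))) (m n : ℤ) : G.Reachable (f m) (f n) := by
  have hup : ∀ (m : ℤ) (k : ℕ), G.Reachable (f m) (f (m + k)) := by
    intro m k
    induction k with
    | zero => simp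
    | succ k ih => exact ih.trans (by simpa [add_assoc] using h (m + k))
  rcases le_total m n with hmn | hnm
  · obtain ⟨k, rfl⟩ := Int.le.dest hmn
    exact hup m k
  · obtain ⟨k, rfl⟩ := Int.le.dest hnm
    exact (hup n k).symm

variable [DecidableEq V] [G.LocallyFinite]

theorem dist_le_two_of_mem_insert_neighborFinset {c u v : V}
    (hu : u ∈ insert c (G.neighborFinset c)) (hv : v ∈ insert c (G.neighborFinset c)) :
    G.dist u v ≤ 2 := by
  simp only [mem_insert, mem_neighborFinset] at hu hv
  rcases hu with rfl | hu <;> rcases hv with rfl | hv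
  · simp
  · exact dist_le_two_of_adj hv
  · exact dist_le_two_of_adj hu.symm
  · exact dist_le_two_of_adj_of_adj hu.symm hv

theorem Connected.tsum_dist_le_two_le (hG : G.Connected) (c : V) {f : V → ℝ}
    (hf : ∀ x, 0 ≤ f x) :
    ∑' u : {v | G.dist c v ≤ 2}, f u ≤ ∑ u ∈ insert c (G.neighborFinset c), f u +
      ∑ n ∈ G.neighborFinset c, ∑ w ∈ (G.neighborFinset n).erase c, f w := by
  set A := insert c (G.neighborFinset c)
  set B := (G.neighborFinset c).biUnion fun n => (G.neighborFinset n).erase c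
  have hcover : {v | G.dist c v ≤ 2} ⊆ ↑(A ∪ B) := by
    intro v hv
    simp only [coe_union, Set.mem_union, mem_coe, A, B, mem_insert, mem_neighborFinset,
      mem_biUnion, mem_erase]
    rcases hG.eq_or_adj_or_exists_of_dist_le_two hv with rfl | h | ⟨w, hcw, hwv⟩
    · exact .inl (.inl rfl)
    · exact .inl (.inr h)
    · by_cases hvc : v = c
      · exact .inl (.inl hvc)
      · exact .inr ⟨w, hcw, hvc, hwv⟩
  calc ∑' u : {v | G.dist c v ≤ 2}, f u
      = ∑ x ∈ A ∪ B, Set.indicator {v | G.dist c v ≤ 2} f x := by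
        rw [_root_.tsum_subtype]
        exact tsum_eq_sum fun x hx =>
          Set.indicator_of_notMem (fun h => hx (mem_coe.mp (hcover h))) f
    _ ≤ ∑ x ∈ A ∪ B, f x := sum_le_sum fun x _ => Set.indicator_le_self' (fun x _ => hf x) x
    _ ≤ ∑ x ∈ A, f x + ∑ x ∈ B, f x := by
        rw [← sum_union_inter]; linarith [sum_nonneg fun x (_ : x ∈ A ∩ B) => hf x]
    _ ≤ _ := by gcongr; exact sum_biUnion_le_of_nonneg _ _ hf

end SimpleGraph

def hexVertical (u : ℤ × ℤ) : ℤ := if (u.1 + u.2) % 2 = 0 then 1 else -1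

def hexNeighbors (u : ℤ × ℤ) : Finset (ℤ × ℤ) :=
  {(u.1 + 1, u.2), (u.1 - 1, u.2), (u.1, u.2 + hexVertical u)}

theorem hexGraph_adj_iff {u v : ℤ × ℤ} : hexGraph.Adj u v ↔ v ∈ hexNeighbors u := by
  obtain ⟨a, b⟩ := u
  obtain ⟨x, y⟩ := v
  simp only [hexGraph, hexNeighbors, hexVertical, mem_insert, mem_singleton, Prod.mk.injEq]
  split_ifs <;> omega

instance : hexGraph.LocallyFinite := fun u =>
  Fintype.ofFinset (hexNeighbors u) fun _ => hexGraph_adj_iff.symm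

theorem hexGraph_neighborFinset (u : ℤ × ℤ) : hexGraph.neighborFinset u = hexNeighbors u := by
  ext v
  rw [SimpleGraph.mem_neighborFinset, hexGraph_adj_iff]

theorem hexGraph_isRegularOfDegree : hexGraph.IsRegularOfDegree 3 := by
  intro u
  rw [← SimpleGraph.card_neighborFinset_eq_degree, hexGraph_neighborFinset, hexNeighbors]
  have : hexVertical u ≠ 0 := by unfold hexVertical; split_ifs <;> simp
  rw [card_insert_of_notMem, card_pair] <;> simp [this]; omega

theorem hexGraph_connected : hexGraph.Connected := by
  have hright : ∀ a b : ℤ, hexGraph.Adj (a, b) (a + 1, b) := fun a b => by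
    simp [hexGraph]
  have hup : ∀ a b : ℤ, hexGraph.Reachable (a, b) (a, b + 1) := fun a b => by
    by_cases hab : (a + b) % 2 = 0
    · exact SimpleGraph.Adj.reachable (by simp [hexGraph]; omega)
    · have h₁ : hexGraph.Adj (a + 1, b) (a + 1, b + 1) := by simp [hexGraph]; omega
      have h₂ : hexGraph.Adj (a + 1, b + 1) (a, b + 1) := by simp [hexGraph]
      exact (hright a b).reachable.trans (h₁.reachable.trans h₂.reachable)
  refine (hexGraph.connected_iff_exists_forall_reachable).mpr ⟨(0, 0), fun ⟨a, b⟩ => ?_⟩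
  exact (SimpleGraph.reachable_of_forall_reachable_add_one (f := fun n => (n, 0))
      (fun n => (hright n 0).reachable) 0 a).trans
    (SimpleGraph.reachable_of_forall_reachable_add_one (f := fun n => (a, n)) (hup a) 0 b)

theorem isIdentifying2.injective {C : Set (ℤ × ℤ)} (hC : isIdentifying2 C) :
    Function.Injective (I2 C) :=
  fun u v h => by_contra fun hne => (hC u).2 v hne h

section Share

variable {C : Set (ℤ × ℤ)} {c : ℤ × ℤ}

theorem sum_one_div_ncard_I2_insert_neighborFinset_le (hC : isIdentifying2 C) (hc : c ∈ C)
    (hadj : ∀ v, hexGraph.Adj c v → v ∈ C) :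
    ∑ u ∈ insert c (hexGraph.neighborFinset c), 1 / ((I2 C u).ncard : ℝ) ≤ 17 / 20 := by
  set T := insert c (hexGraph.neighborFinset c)
  have hcard : #T = 4 := by
    rw [card_insert_of_notMem (hexGraph.notMem_neighborFinset_self c),
      SimpleGraph.card_neighborFinset_eq_degree, hexGraph_isRegularOfDegree.degree_eq]
  have hTC : ∀ x ∈ T, x ∈ C := by
    intro x hx
    rcases mem_insert.mp hx with rfl | hx
    exacts [hc, hadj x ((hexGraph.mem_neighborFinset c x).mp hx)]
  have hsub : ∀ u ∈ T, ↑T ⊆ I2 C u := fun u hu x hx =>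
    ⟨SimpleGraph.dist_le_two_of_mem_insert_neighborFinset hu hx, hTC x hx⟩
  have := sum_one_div_ncard_le_of_injOn hC.injective.injOn ⟨c, mem_insert_self _ _⟩ hsub
  rw [hcard] at this
  exact this.trans_eq (by norm_num)

theorem sum_one_div_ncard_I2_erase_neighborFinset_le (hC : isIdentifying2 C) (hc : c ∈ C)
    {n : ℤ × ℤ} (hn : n ∈ C) (hcn : hexGraph.Adj c n) :
    ∑ w ∈ (hexGraph.neighborFinset n).erase c, 1 / ((I2 C w).ncard : ℝ) ≤ 5 / 6 := by
  have hcardT : #((hexGraph.neighborFinset n).erase c) = 2 := by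
    rw [card_erase_of_mem ((hexGraph.mem_neighborFinset n c).mpr hcn.symm),
      SimpleGraph.card_neighborFinset_eq_degree, hexGraph_isRegularOfDegree.degree_eq]
  have hcards : #({c, n} : Finset (ℤ × ℤ)) = 2 := card_pair hcn.ne
  have hsub : ∀ w ∈ (hexGraph.neighborFinset n).erase c,
      ↑({c, n} : Finset (ℤ × ℤ)) ⊆ I2 C w := by
    intro w hw x hx
    have hnw : hexGraph.Adj w n :=
      ((hexGraph.mem_neighborFinset n w).mp (mem_of_mem_erase hw)).symm
    rcases mem_insert.mp hx with rfl | hx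
    · exact ⟨SimpleGraph.dist_le_two_of_adj_of_adj hnw hcn.symm, hc⟩
    · rw [mem_singleton.mp hx]
      exact ⟨SimpleGraph.dist_le_two_of_adj hnw, hn⟩
  have := sum_one_div_ncard_le_of_injOn hC.injective.injOn ⟨c, mem_insert_self _ _⟩ hsub
  rw [hcardT, hcards] at this
  exact this.trans_eq (by norm_num)

end Share

theorem stmt8 (C : Set (ℤ × ℤ)) (hC : isIdentifying2 C) (c : ℤ × ℤ) (hc : c ∈ C)
    (hadj : ∀ v : ℤ × ℤ, hexGraph.Adj c v → v ∈ C) :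
    share2 C c ≤ 67 / 20 := by
  calc share2 C c
      ≤ ∑ u ∈ insert c (hexGraph.neighborFinset c), 1 / ((I2 C u).ncard : ℝ) +
          ∑ n ∈ hexGraph.neighborFinset c, ∑ w ∈ (hexGraph.neighborFinset n).erase c,
            1 / ((I2 C w).ncard : ℝ) :=
        hexGraph_connected.tsum_dist_le_two_le c (f := fun u => 1 / ((I2 C u).ncard : ℝ))
          fun u => by positivity
    _ ≤ 17 / 20 + ∑ _n ∈ hexGraph.neighborFinset c, (5 / 6 : ℝ) := by
      gcongr with n hn
      · exact sum_one_div_ncard_I2_insert_neighborFinset_le hC hc hadj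
      · have hcn := (hexGraph.mem_neighborFinset c n).mp hn
        exact sum_one_div_ncard_I2_erase_neighborFinset_le hC hc (hadj n hcn) hcn
    _ = 67 / 20 := by
      rw [sum_const, SimpleGraph.card_neighborFinset_eq_degree,
        hexGraph_isRegularOfDegree.degree_eq]
      norm_num
end
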